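/- Let G and H be finite abstract simplicial complexes and let G' denote the connection graph of G: vertices are the simplices of G, and two distinct simplices are adjacent iff they intersect. Then the connection graph of the Cartesian product satisfies (G × H)' = G' ⊠ H', the strong product of the graphs G' and H'. Here two distinct cells x×y and a×b of G×H are adjacent iff (x×y) ∩ (a×b) ≠ ∅. -/

import Mathlib

/-- `G` is a finite abstract simplicial complex. -/
def IsSimplicialComplex {α : Type*} [DecidableEq α] (G : Finset (Finset α)) : Prop :=
  ∀ x ∈ G, x.Nonempty ∧ ∀ y ⊆ x, y.Nonempty → y ∈ G

/-- The strong product of two simple graphs: (a,b) ≠ (c,d) are adjacent iff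
(a = c or a ~ c) and (b = d or b ~ d). -/
def strongProd {α β : Type*} (G : SimpleGraph α) (H : SimpleGraph β) :
    SimpleGraph (α × β) where
  Adj p q := p ≠ q ∧ (p.1 = q.1 ∨ G.Adj p.1 q.1) ∧ (p.2 = q.2 ∨ H.Adj p.2 q.2)
  symm := by
    constructor
    rintro p q ⟨h1, h2, h3⟩
    exact ⟨h1.symm, h2.imp Eq.symm SimpleGraph.Adj.symm,
      h3.imp Eq.symm SimpleGraph.Adj.symm⟩
  loopless := ⟨fun p h => h.1 rfl⟩

/-- The connection graph of a simplicial complex: vertices are the simplices,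
two distinct simplices are adjacent iff they intersect. -/
def connectionGraph {α : Type*} (G : Finset (Finset α)) :
    SimpleGraph {x // x ∈ G} where
  Adj x y := x ≠ y ∧ ¬ Disjoint x.1 y.1
  symm := by
    constructor
    rintro x y ⟨h1, h2⟩
    exact ⟨h1.symm, fun d => h2 d.symm⟩
  loopless := ⟨fun x h => h.1 rfl⟩

/-- The connection graph of the Cartesian product G × H: vertices are the product
cells x × y, two distinct cells are adjacent iff the set products intersect. -/
def prodConnectionGraph {α β : Type*} (G : Finset (Finset α)) (H : Finset (Finset β)) :
    SimpleGraph ({x // x ∈ G} × {y // y ∈ H}) where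
  Adj p q := p ≠ q ∧ ¬ Disjoint (p.1.1 ×ˢ p.2.1) (q.1.1 ×ˢ q.2.1)
  symm := by
    constructor
    rintro p q ⟨h1, h2⟩
    exact ⟨h1.symm, fun d => h2 d.symm⟩
  loopless := ⟨fun p h => h.1 rfl⟩

theorem eq_or_connectionGraph_adj_iff {α : Type*} {G : Finset (Finset α)}
    (hG : ∀ x ∈ G, x.Nonempty) {x y : {x // x ∈ G}} :
    x = y ∨ (connectionGraph G).Adj x y ↔ ¬ Disjoint x.1 y.1 := by
  constructor
  · rintro (rfl | hxy)
    · exact (Finset.disjoint_self_iff_empty _).not.2 (hG x.1 x.2).ne_empty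
    · exact hxy.2
  · intro hxy
    by_cases h : x = y
    · exact Or.inl h
    · exact Or.inr ⟨h, hxy⟩

/-- Connection lemma: (G × H)' = G' ⊠ H'. -/
theorem connectionGraph_product {α β : Type*} [DecidableEq α] [DecidableEq β]
    (G : Finset (Finset α)) (H : Finset (Finset β))
    (hG : IsSimplicialComplex G) (hH : IsSimplicialComplex H) :
    prodConnectionGraph G H = strongProd (connectionGraph G) (connectionGraph H) := by
  ext p q
  change p ≠ q ∧ ¬ Disjoint (p.1.1 ×ˢ p.2.1) (q.1.1 ×ˢ q.2.1) ↔
    p ≠ q ∧ (p.1 = q.1 ∨ (connectionGraph G).Adj p.1 q.1) ∧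
      (p.2 = q.2 ∨ (connectionGraph H).Adj p.2 q.2)
  rw [Finset.disjoint_product, not_or, eq_or_connectionGraph_adj_iff (fun x hx => (hG x hx).1),
    eq_or_connectionGraph_adj_iff (fun y hy => (hH y hy).1)]
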